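/- arXiv:math/0011145 — 3 statements merged into one kernel-verified Lean document; each statement's English description precedes it below -/
import Mathlib

section
/- The constant rational dynamical R-matrix R̄(λ) = ∑_{a,b} E_{aa}⊗E_{bb} + ∑_{a≠b} (E_{aa}⊗E_{bb} - E_{ab}⊗E_{ba})/λ_{ab} satisfies the dynamical Yang–Baxter equation R̄^{12}(λ-h^{(3)}) R̄^{13}(λ) R̄^{23}(λ-h^{(1)}) = R̄^{23}(λ) R̄^{13}(λ-h^{(2)}) R̄^{12}(λ). -/
/-- The constant rational dynamical R-matrix
`R̄(λ) = ∑_{a,b} E_{aa}⊗E_{bb} + ∑_{a≠b} (E_{aa}⊗E_{bb} - E_{ab}⊗E_{ba})/λ_{ab}`,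
written as a matrix on `ℂ^N ⊗ ℂ^N`. -/
noncomputable def Rbar (N : ℕ) (lam : Fin N → ℂ) :
    Matrix (Fin N × Fin N) (Fin N × Fin N) ℂ := fun p q =>
  (if p = q then 1 else 0) +
    (if p.1 ≠ p.2 then
      ((if p = q then 1 else 0) - (if p.1 = q.2 ∧ p.2 = q.1 then 1 else 0)) /
        (lam p.1 - lam p.2)
    else 0)

/-- Weight of the `a`-th basis vector of the vector representation `ℂ^N`. -/
noncomputable def epsv (N : ℕ) (a : Fin N) : Fin N → ℂ := fun c => if c = a then 1 else 0

/-- `R̄^{12}(λ - sh(third factor))` acting on the triple tensor product;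
the dynamical shift is by the weight of the third tensor factor. -/
noncomputable def R12op (N : ℕ) (lam : Fin N → ℂ) (sh : Fin N → Fin N → ℂ) :
    Matrix (Fin N × Fin N × Fin N) (Fin N × Fin N × Fin N) ℂ := fun p q =>
  if p.2.2 = q.2.2 then Rbar N (fun c => lam c - sh p.2.2 c) (p.1, p.2.1) (q.1, q.2.1) else 0

/-- `R̄^{13}(λ - sh(second factor))`. -/
noncomputable def R13op (N : ℕ) (lam : Fin N → ℂ) (sh : Fin N → Fin N → ℂ) :
    Matrix (Fin N × Fin N × Fin N) (Fin N × Fin N × Fin N) ℂ := fun p q =>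
  if p.2.1 = q.2.1 then Rbar N (fun c => lam c - sh p.2.1 c) (p.1, p.2.2) (q.1, q.2.2) else 0

/-- `R̄^{23}(λ - sh(first factor))`. -/
noncomputable def R23op (N : ℕ) (lam : Fin N → ℂ) (sh : Fin N → Fin N → ℂ) :
    Matrix (Fin N × Fin N × Fin N) (Fin N × Fin N × Fin N) ℂ := fun p q =>
  if p.1 = q.1 then Rbar N (fun c => lam c - sh p.1 c) (p.2.1, p.2.2) (q.2.1, q.2.2) else 0


noncomputable def rfun (N : ℕ) (μ : Fin N → ℂ) (x y : Fin N) : ℂ :=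
  if x = y then 0 else (μ x - μ y)⁻¹

lemma mul_row {n : Type*} [Fintype n] [DecidableEq n] (M X : Matrix n n ℂ) (p : n)
    {q1 q2 : n} {v1 v2 : ℂ}
    (h : ∀ q, M p q = (if q = q1 then v1 else 0) + (if q = q2 then v2 else 0)) (s : n) :
    (M * X) p s = v1 * X q1 s + v2 * X q2 s := by
  simp [Matrix.mul_apply, h, add_mul, ite_mul, Finset.sum_add_distrib, Finset.sum_ite_eq']

lemma Rbar_row (N : ℕ) (μ : Fin N → ℂ) (a b : Fin N) (q : Fin N × Fin N) :
    Rbar N μ (a, b) q =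
      (if q = (a, b) then 1 + rfun N μ a b else 0) +
        (if q = (b, a) then -(rfun N μ a b) else 0) := by
  obtain ⟨a', b'⟩ := q
  simp only [Rbar, rfun, Prod.mk.injEq, ne_eq]
  by_cases hab : a = b <;> by_cases h1 : a' = a <;> by_cases h2 : b' = b <;>
    by_cases h3 : a' = b <;> by_cases h4 : b' = a <;>
    simp_all [eq_comm] <;> field_simp


lemma R12_row (N : ℕ) (lam : Fin N → ℂ) (sh : Fin N → Fin N → ℂ)
    (p q : Fin N × Fin N × Fin N) :
    R12op N lam sh p q =
      (if q = p then 1 + rfun N (fun c => lam c - sh p.2.2 c) p.1 p.2.1 else 0) +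
        (if q = (p.2.1, p.1, p.2.2) then
          -(rfun N (fun c => lam c - sh p.2.2 c) p.1 p.2.1) else 0) := by
  obtain ⟨a, b, c⟩ := p; obtain ⟨d, e, f⟩ := q
  by_cases hf : c = f
  · subst hf
    simp [R12op, Rbar_row, Prod.mk.injEq]
  · simp [R12op, hf, Prod.mk.injEq, Ne.symm hf]

lemma R13_row (N : ℕ) (lam : Fin N → ℂ) (sh : Fin N → Fin N → ℂ)
    (p q : Fin N × Fin N × Fin N) :
    R13op N lam sh p q =
      (if q = p then 1 + rfun N (fun c => lam c - sh p.2.1 c) p.1 p.2.2 else 0) +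
        (if q = (p.2.2, p.2.1, p.1) then
          -(rfun N (fun c => lam c - sh p.2.1 c) p.1 p.2.2) else 0) := by
  obtain ⟨a, b, c⟩ := p; obtain ⟨d, e, f⟩ := q
  by_cases hf : b = e
  · subst hf
    simp [R13op, Rbar_row, Prod.mk.injEq]
  · simp [R13op, hf, Prod.mk.injEq, Ne.symm hf]

lemma R23_row (N : ℕ) (lam : Fin N → ℂ) (sh : Fin N → Fin N → ℂ)
    (p q : Fin N × Fin N × Fin N) :
    R23op N lam sh p q =
      (if q = p then 1 + rfun N (fun c => lam c - sh p.1 c) p.2.1 p.2.2 else 0) +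
        (if q = (p.1, p.2.2, p.2.1) then
          -(rfun N (fun c => lam c - sh p.1 c) p.2.1 p.2.2) else 0) := by
  obtain ⟨a, b, c⟩ := p; obtain ⟨d, e, f⟩ := q
  by_cases hf : a = d
  · subst hf
    simp [R23op, Rbar_row, Prod.mk.injEq]
  · simp [R23op, hf, Prod.mk.injEq, Ne.symm hf]


lemma R12_mul (N : ℕ) (lam : Fin N → ℂ) (sh : Fin N → Fin N → ℂ)
    (X : Matrix (Fin N × Fin N × Fin N) (Fin N × Fin N × Fin N) ℂ)
    (p s : Fin N × Fin N × Fin N) :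
    (R12op N lam sh * X) p s =
      (1 + rfun N (fun c => lam c - sh p.2.2 c) p.1 p.2.1) * X p s +
        (-(rfun N (fun c => lam c - sh p.2.2 c) p.1 p.2.1)) * X (p.2.1, p.1, p.2.2) s :=
  mul_row _ _ _ (R12_row N lam sh p) s

lemma R13_mul (N : ℕ) (lam : Fin N → ℂ) (sh : Fin N → Fin N → ℂ)
    (X : Matrix (Fin N × Fin N × Fin N) (Fin N × Fin N × Fin N) ℂ)
    (p s : Fin N × Fin N × Fin N) :
    (R13op N lam sh * X) p s =
      (1 + rfun N (fun c => lam c - sh p.2.1 c) p.1 p.2.2) * X p s +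
        (-(rfun N (fun c => lam c - sh p.2.1 c) p.1 p.2.2)) * X (p.2.2, p.2.1, p.1) s :=
  mul_row _ _ _ (R13_row N lam sh p) s

lemma R23_mul (N : ℕ) (lam : Fin N → ℂ) (sh : Fin N → Fin N → ℂ)
    (X : Matrix (Fin N × Fin N × Fin N) (Fin N × Fin N × Fin N) ℂ)
    (p s : Fin N × Fin N × Fin N) :
    (R23op N lam sh * X) p s =
      (1 + rfun N (fun c => lam c - sh p.1 c) p.2.1 p.2.2) * X p s +
        (-(rfun N (fun c => lam c - sh p.1 c) p.2.1 p.2.2)) * X (p.1, p.2.2, p.2.1) s :=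
  mul_row _ _ _ (R23_row N lam sh p) s


lemma nzfacts (N : ℕ) (lam : Fin N → ℂ)
    (hgen : ∀ a b : Fin N, a ≠ b →
      lam a - lam b ≠ 0 ∧ lam a - lam b ≠ 1 ∧ lam a - lam b ≠ -1)
    {x y : Fin N} (h : x ≠ y) :
    lam x - lam y ≠ 0 ∧ lam x - 1 - lam y ≠ 0 ∧ lam x - (lam y - 1) ≠ 0 ∧
      lam x - lam y - 1 ≠ 0 ∧ lam x - lam y + 1 ≠ 0 := by
  refine ⟨(hgen x y h).1, fun h0 => (hgen x y h).2.1 (by linear_combination h0),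
    fun h0 => (hgen x y h).2.2 (by linear_combination h0),
    fun h0 => (hgen x y h).2.1 (by linear_combination h0),
    fun h0 => (hgen x y h).2.2 (by linear_combination h0)⟩

set_option maxHeartbeats 2000000 in
/-- The constant rational dynamical R-matrix `R̄(λ)` satisfies the dynamical Yang–Baxter
equation `R̄^{12}(λ-h^{(3)}) R̄^{13}(λ) R̄^{23}(λ-h^{(1)}) =
R̄^{23}(λ) R̄^{13}(λ-h^{(2)}) R̄^{12}(λ)`. -/
theorem Rbar_dynamical_Yang_Baxter (N : ℕ) (lam : Fin N → ℂ)
    (hgen : ∀ a b : Fin N, a ≠ b →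
      lam a - lam b ≠ 0 ∧ lam a - lam b ≠ 1 ∧ lam a - lam b ≠ -1) :
    R12op N lam (epsv N) * R13op N lam (fun _ _ => 0) * R23op N lam (epsv N) =
      R23op N lam (fun _ _ => 0) * R13op N lam (epsv N) * R12op N lam (fun _ _ => 0) := by
  ext ⟨a, b, c⟩ ⟨d, e, f⟩
  simp only [Matrix.mul_assoc, R12_mul, R13_mul, R23_mul, R12_row, R23_row, rfun, epsv,
    Prod.mk.injEq]
  rcases eq_or_ne a b with rfl | hab
  · rcases eq_or_ne a c with rfl | hac
    · simp
    · obtain ⟨n1, n2, n3, n4, n5⟩ := nzfacts N lam hgen hac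
      obtain ⟨m1, m2, m3, m4, m5⟩ := nzfacts N lam hgen hac.symm
      simp only [hac, Ne.symm hac, if_true, if_false, eq_self_iff_true, sub_zero, ite_true,
        ite_false, ne_eq, not_false_iff]
      split_ifs <;> first | ring1 | (field_simp; ring1) | (simp_all; done)
  · rcases eq_or_ne a c with rfl | hac
    · obtain ⟨n1, n2, n3, n4, n5⟩ := nzfacts N lam hgen hab
      obtain ⟨m1, m2, m3, m4, m5⟩ := nzfacts N lam hgen hab.symm
      simp only [hab, Ne.symm hab, if_true, if_false, eq_self_iff_true, sub_zero, ite_true,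
        ite_false, ne_eq, not_false_iff]
      split_ifs <;> first | ring1 | (field_simp; ring1) | (simp_all; done)
    · rcases eq_or_ne b c with rfl | hbc
      · obtain ⟨n1, n2, n3, n4, n5⟩ := nzfacts N lam hgen hab
        obtain ⟨m1, m2, m3, m4, m5⟩ := nzfacts N lam hgen hab.symm
        simp only [hab, Ne.symm hab, if_true, if_false, eq_self_iff_true, sub_zero, ite_true,
          ite_false, ne_eq, not_false_iff]
        split_ifs <;> first | ring1 | (field_simp; ring1) | (simp_all; done)
      · obtain ⟨n1, -, -, -, -⟩ := nzfacts N lam hgen hab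
        obtain ⟨m1, -, -, -, -⟩ := nzfacts N lam hgen hab.symm
        obtain ⟨p1, -, -, -, -⟩ := nzfacts N lam hgen hac
        obtain ⟨q1, -, -, -, -⟩ := nzfacts N lam hgen hac.symm
        obtain ⟨r1, -, -, -, -⟩ := nzfacts N lam hgen hbc
        obtain ⟨s1, -, -, -, -⟩ := nzfacts N lam hgen hbc.symm
        by_cases h1 : d = a ∧ e = b ∧ f = c
        · obtain ⟨rfl, rfl, rfl⟩ := h1
          simp only [hab, Ne.symm hab, hac, Ne.symm hac, hbc, Ne.symm hbc, eq_self_iff_true, and_true, true_and, and_false, false_and, and_self, if_true, if_false, ite_true, ite_false, sub_zero, ne_eq, not_false_iff, if_neg, mul_zero, zero_mul, add_zero, zero_add, mul_one, one_mul, neg_zero, mul_neg, neg_neg]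
          first | ring1 | (field_simp; ring1)
        by_cases h2 : d = a ∧ e = c ∧ f = b
        · obtain ⟨rfl, rfl, rfl⟩ := h2
          simp only [h1, hab, Ne.symm hab, hac, Ne.symm hac, hbc, Ne.symm hbc, eq_self_iff_true, and_true, true_and, and_false, false_and, and_self, if_true, if_false, ite_true, ite_false, sub_zero, ne_eq, not_false_iff, if_neg, mul_zero, zero_mul, add_zero, zero_add, mul_one, one_mul, neg_zero, mul_neg, neg_neg]
          first | ring1 | (field_simp; ring1)
        by_cases h3 : d = b ∧ e = a ∧ f = c
        · obtain ⟨rfl, rfl, rfl⟩ := h3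
          simp only [h1, h2, hab, Ne.symm hab, hac, Ne.symm hac, hbc, Ne.symm hbc, eq_self_iff_true, and_true, true_and, and_false, false_and, and_self, if_true, if_false, ite_true, ite_false, sub_zero, ne_eq, not_false_iff, if_neg, mul_zero, zero_mul, add_zero, zero_add, mul_one, one_mul, neg_zero, mul_neg, neg_neg]
          first | ring1 | (field_simp; ring1)
        by_cases h4 : d = b ∧ e = c ∧ f = a
        · obtain ⟨rfl, rfl, rfl⟩ := h4
          simp only [h1, h2, h3, hab, Ne.symm hab, hac, Ne.symm hac, hbc, Ne.symm hbc, eq_self_iff_true, and_true, true_and, and_false, false_and, and_self, if_true, if_false, ite_true, ite_false, sub_zero, ne_eq, not_false_iff, if_neg, mul_zero, zero_mul, add_zero, zero_add, mul_one, one_mul, neg_zero, mul_neg, neg_neg]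
          first | ring1 | (field_simp; ring1)
        by_cases h5 : d = c ∧ e = a ∧ f = b
        · obtain ⟨rfl, rfl, rfl⟩ := h5
          simp only [h1, h2, h3, h4, hab, Ne.symm hab, hac, Ne.symm hac, hbc, Ne.symm hbc, eq_self_iff_true, and_true, true_and, and_false, false_and, and_self, if_true, if_false, ite_true, ite_false, sub_zero, ne_eq, not_false_iff, if_neg, mul_zero, zero_mul, add_zero, zero_add, mul_one, one_mul, neg_zero, mul_neg, neg_neg]
          first | ring1 | (field_simp; ring1)
        by_cases h6 : d = c ∧ e = b ∧ f = a
        · obtain ⟨rfl, rfl, rfl⟩ := h6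
          simp only [h1, h2, h3, h4, h5, hab, Ne.symm hab, hac, Ne.symm hac, hbc, Ne.symm hbc, eq_self_iff_true, and_true, true_and, and_false, false_and, and_self, if_true, if_false, ite_true, ite_false, sub_zero, ne_eq, not_false_iff, if_neg, mul_zero, zero_mul, add_zero, zero_add, mul_one, one_mul, neg_zero, mul_neg, neg_neg]
          first | ring1 | (field_simp; ring1)
        simp only [if_neg h1, if_neg h2, if_neg h3, if_neg h4, if_neg h5, if_neg h6]
        ring1
end

section
/- The elliptic dynamical R-matrix R(u,λ) = ∑_a E_{aa}⊗E_{aa} + ∑_{a≠b} ( α(u,λ_{ab}) E_{aa}⊗E_{bb} + β(u,λ_{ab}) E_{ab}⊗E_{ba} ), with α(u,ξ) = θ(u)θ(ξ+γ)/(θ(u-γ)θ(ξ)) and β(u,ξ) = -θ(u+ξ)θ(γ)/(θ(u-γ)θ(ξ)), satisfies the inversion relation R(u,λ) R^{21}(-u,λ) = 1. -/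
/-- The Jacobi theta function. -/
noncomputable def jtheta (τ u : ℂ) : ℂ :=
  -∑' m : ℤ, Complex.exp ((Real.pi : ℂ) * Complex.I * τ * ((m : ℂ) + 1 / 2) ^ 2 +
      2 * (Real.pi : ℂ) * Complex.I * ((m : ℂ) + 1 / 2) * (u + 1 / 2))

/-- `α(u,ξ) = θ(u)θ(ξ+γ)/(θ(u-γ)θ(ξ))`. -/
noncomputable def alphaF (τ γ u ξ : ℂ) : ℂ :=
  jtheta τ u * jtheta τ (ξ + γ) / (jtheta τ (u - γ) * jtheta τ ξ)

/-- `β(u,ξ) = -θ(u+ξ)θ(γ)/(θ(u-γ)θ(ξ))`. -/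
noncomputable def betaF (τ γ u ξ : ℂ) : ℂ :=
  -(jtheta τ (u + ξ) * jtheta τ γ) / (jtheta τ (u - γ) * jtheta τ ξ)

/-- The elliptic dynamical R-matrix
`R(u,λ) = ∑_a E_{aa}⊗E_{aa} + ∑_{a≠b} (α(u,λ_{ab}) E_{aa}⊗E_{bb} + β(u,λ_{ab}) E_{ab}⊗E_{ba})`. -/
noncomputable def Rell (N : ℕ) (τ γ u : ℂ) (lam : Fin N → ℂ) :
    Matrix (Fin N × Fin N) (Fin N × Fin N) ℂ := fun p q =>
  if p.1 = p.2 then (if q = p then 1 else 0)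
  else
    (if q = p then alphaF τ γ u (lam p.1 - lam p.2) else 0) +
      (if q = (p.2, p.1) then betaF τ γ u (lam p.1 - lam p.2) else 0)

/-- `R^{21}(u,λ) = P R(u,λ) P`, the flip-conjugated R-matrix. -/
noncomputable def Rell21 (N : ℕ) (τ γ u : ℂ) (lam : Fin N → ℂ) :
    Matrix (Fin N × Fin N) (Fin N × Fin N) ℂ := fun p q =>
  Rell N τ γ u lam (p.2, p.1) (q.2, q.1)

/-!
Off the diagonal, `R(u,λ)` and `R²¹(-u,λ)` only mix `e_a ⊗ e_b` with `e_b ⊗ e_a`, so the inversion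
relation reduces to two scalar identities in `ξ = λ_a - λ_b`. The one giving the off-diagonal entry,
`α(u,ξ)β(-u,-ξ) + β(u,ξ)α(-u,ξ) = 0`, only uses that `θ` is odd. The one giving the diagonal entry,
`α(u,ξ)α(-u,-ξ) + β(u,ξ)β(-u,ξ) = 1`, is the three-term identity
`θ(u+ξ)θ(u-ξ)θ(γ)² = θ(u+γ)θ(u-γ)θ(ξ)² + θ(u)²θ(γ+ξ)θ(γ-ξ)`.

That identity comes from the product formula `θ(x)θ(y) = Q(x+y)S(x-y) - S(x+y)Q(x-y)`, where `Q`
and `S` are the theta functions with characteristics `0` and `1/2` and modulus `2τ`: split the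
double series of `θ(x)θ(y)` over `(m,n)` by the parity of `m + n` and write `(m,n) = (p+q, p-q)` or
`(p+q, p-q-1)`. Each of the six products `θ(a+b)θ(a-b)` in the three-term identity is then a `2 × 2`
determinant in values of `Q` and `S`, and the identity becomes a Plücker relation among them.
-/

open Complex Real

noncomputable def thetaTerm (τ c z : ℂ) (n : ℤ) : ℂ :=
  cexp (π * I * τ * (n + c) ^ 2 + 2 * π * I * (n + c) * z)

noncomputable def thetaChar (τ c z : ℂ) : ℂ := ∑' n : ℤ, thetaTerm τ c z n

lemma jtheta_eq_neg_thetaChar (τ u : ℂ) : jtheta τ u = -thetaChar τ (1 / 2) (u + 1 / 2) := rfl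

lemma exp_eq_neg_exp_of_eq {a b : ℂ} (m : ℤ) (h : a = b + π * I + m * (2 * π * I)) :
    cexp a = -cexp b := by
  rw [show -cexp b = cexp (b + π * I) by rw [Complex.exp_add, exp_pi_mul_I]; ring]
  exact exp_eq_exp_iff_exists_int.mpr ⟨m, h⟩

lemma thetaTerm_eq_mul_jacobiTheta₂_term (τ c z : ℂ) (n : ℤ) :
    thetaTerm τ c z n =
      cexp (π * I * τ * c ^ 2 + 2 * π * I * c * z) * jacobiTheta₂_term n (z + τ * c) τ := by
  rw [thetaTerm, jacobiTheta₂_term, ← Complex.exp_add]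
  ring_nf

lemma summable_norm_thetaTerm {τ : ℂ} (hτ : 0 < τ.im) (c z : ℂ) :
    Summable fun n : ℤ => ‖thetaTerm τ c z n‖ := by
  simp_rw [thetaTerm_eq_mul_jacobiTheta₂_term, norm_mul]
  exact (summable_norm_iff.mpr ((summable_jacobiTheta₂_term_iff _ τ).mpr hτ)).mul_left _

lemma hasSum_thetaTerm_mul_thetaTerm {τ : ℂ} (hτ : 0 < τ.im) (c z c' z' : ℂ) :
    HasSum (fun n : ℤ × ℤ => thetaTerm τ c z n.1 * thetaTerm τ c' z' n.2)
      (thetaChar τ c z * thetaChar τ c' z') :=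
  HasSum.mul (summable_norm_thetaTerm hτ c z).of_norm.hasSum
    (summable_norm_thetaTerm hτ c' z').of_norm.hasSum
    (summable_mul_of_summable_norm (summable_norm_thetaTerm hτ c z)
      (summable_norm_thetaTerm hτ c' z'))

lemma thetaTerm_neg (τ u : ℂ) (m : ℤ) :
    thetaTerm τ (1 / 2) (-u + 1 / 2) (-1 - m) = -thetaTerm τ (1 / 2) (u + 1 / 2) m := by
  refine exp_eq_neg_exp_of_eq (-(m + 1)) ?_
  push_cast
  ring

theorem jtheta_neg (τ u : ℂ) : jtheta τ (-u) = -jtheta τ u := by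
  rw [jtheta_eq_neg_thetaChar, jtheta_eq_neg_thetaChar, thetaChar, thetaChar,
    ← (Equiv.subLeft (-1 : ℤ)).tsum_eq]
  simp_rw [Equiv.subLeft_apply, thetaTerm_neg, tsum_neg]

def sumDiffEquiv : (ℤ × ℤ) ⊕ (ℤ × ℤ) ≃ ℤ × ℤ where
  toFun := Sum.elim (fun n => (n.1 + n.2, n.1 - n.2)) (fun n => (n.1 + n.2, n.1 - n.2 - 1))
  invFun m :=
    if (m.1 + m.2) % 2 = 0 then .inl ((m.1 + m.2) / 2, (m.1 - m.2) / 2)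
    else .inr ((m.1 + m.2 + 1) / 2, (m.1 - m.2 - 1) / 2)
  left_inv := by
    rintro (⟨p, q⟩ | ⟨p, q⟩) <;> dsimp only [Sum.elim_inl, Sum.elim_inr]
    · rw [if_pos (by omega), Sum.inl.injEq, Prod.mk.injEq]
      omega
    · rw [if_neg (by omega), Sum.inr.injEq, Prod.mk.injEq]
      omega
  right_inv := by
    rintro ⟨m, n⟩
    dsimp only
    split_ifs
    · rw [Sum.elim_inl, Prod.mk.injEq]
      omega
    · rw [Sum.elim_inr, Prod.mk.injEq]
      omega

lemma hasSum_of_hasSum_sumDiff {M : Type*} [AddCommMonoid M] [TopologicalSpace M]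
    [ContinuousAdd M] {F : ℤ × ℤ → M} {a b : M}
    (ha : HasSum (fun n : ℤ × ℤ => F (n.1 + n.2, n.1 - n.2)) a)
    (hb : HasSum (fun n : ℤ × ℤ => F (n.1 + n.2, n.1 - n.2 - 1)) b) :
    HasSum F (a + b) :=
  sumDiffEquiv.hasSum_iff.mp (ha.sum hb)

lemma thetaTerm_mul_thetaTerm_add_sub (τ x y : ℂ) (p q : ℤ) :
    thetaTerm τ (1 / 2) (x + 1 / 2) (p + q) * thetaTerm τ (1 / 2) (y + 1 / 2) (p - q) =
      -(thetaTerm (2 * τ) (1 / 2) (x + y) p * thetaTerm (2 * τ) 0 (x - y) q) := by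
  rw [thetaTerm, thetaTerm, thetaTerm, thetaTerm, ← Complex.exp_add, ← Complex.exp_add]
  refine exp_eq_neg_exp_of_eq p ?_
  push_cast
  ring

lemma thetaTerm_mul_thetaTerm_add_sub_sub_one (τ x y : ℂ) (p q : ℤ) :
    thetaTerm τ (1 / 2) (x + 1 / 2) (p + q) * thetaTerm τ (1 / 2) (y + 1 / 2) (p - q - 1) =
      thetaTerm (2 * τ) 0 (x + y) p * thetaTerm (2 * τ) (1 / 2) (x - y) q := by
  rw [thetaTerm, thetaTerm, thetaTerm, thetaTerm, ← Complex.exp_add, ← Complex.exp_add]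
  refine exp_eq_exp_iff_exists_int.mpr ⟨p, ?_⟩
  push_cast
  ring

theorem jtheta_mul_jtheta {τ : ℂ} (hτ : 0 < τ.im) (x y : ℂ) :
    jtheta τ x * jtheta τ y =
      thetaChar (2 * τ) 0 (x + y) * thetaChar (2 * τ) (1 / 2) (x - y) -
        thetaChar (2 * τ) (1 / 2) (x + y) * thetaChar (2 * τ) 0 (x - y) := by
  have h2τ : 0 < (2 * τ).im := by simpa using hτ
  have hsplit := hasSum_of_hasSum_sumDiff
    (F := fun n => thetaTerm τ (1 / 2) (x + 1 / 2) n.1 * thetaTerm τ (1 / 2) (y + 1 / 2) n.2)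
    (by simpa only [thetaTerm_mul_thetaTerm_add_sub] using
      (hasSum_thetaTerm_mul_thetaTerm h2τ (1 / 2) (x + y) 0 (x - y)).neg)
    (by simpa only [thetaTerm_mul_thetaTerm_add_sub_sub_one] using
      hasSum_thetaTerm_mul_thetaTerm h2τ 0 (x + y) (1 / 2) (x - y))
  rw [jtheta_eq_neg_thetaChar, jtheta_eq_neg_thetaChar, neg_mul_neg,
    (hasSum_thetaTerm_mul_thetaTerm hτ _ _ _ _).unique hsplit]
  ring

theorem jtheta_three_term {τ : ℂ} (hτ : 0 < τ.im) (u ξ γ : ℂ) :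
    jtheta τ (u + ξ) * jtheta τ (u - ξ) * jtheta τ γ ^ 2 =
      jtheta τ (u + γ) * jtheta τ (u - γ) * jtheta τ ξ ^ 2 +
        jtheta τ u ^ 2 * (jtheta τ (γ + ξ) * jtheta τ (γ - ξ)) := by
  have h : ∀ a b, jtheta τ (a + b) * jtheta τ (a - b) =
      thetaChar (2 * τ) 0 (2 * a) * thetaChar (2 * τ) (1 / 2) (2 * b) -
        thetaChar (2 * τ) (1 / 2) (2 * a) * thetaChar (2 * τ) 0 (2 * b) := fun a b => by
    rw [jtheta_mul_jtheta hτ]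
    ring_nf
  have hsq : ∀ a, jtheta τ a ^ 2 =
      thetaChar (2 * τ) 0 (2 * a) * thetaChar (2 * τ) (1 / 2) 0 -
        thetaChar (2 * τ) (1 / 2) (2 * a) * thetaChar (2 * τ) 0 0 := fun a => by
    simpa [sq] using h a 0
  rw [h, h, h, hsq, hsq, hsq]
  ring

lemma alphaF_mul_betaF_add_betaF_mul_alphaF {τ γ u ξ : ℂ} (hu : jtheta τ (u - γ) ≠ 0)
    (hu' : jtheta τ (-u - γ) ≠ 0) (hξ : jtheta τ ξ ≠ 0) :
    alphaF τ γ u ξ * betaF τ γ (-u) (-ξ) + betaF τ γ u ξ * alphaF τ γ (-u) ξ = 0 := by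
  unfold alphaF betaF
  rw [← neg_add, jtheta_neg τ (u + ξ), jtheta_neg τ u, jtheta_neg τ ξ]
  field_simp
  ring

lemma alphaF_mul_alphaF_add_betaF_mul_betaF {τ γ u ξ : ℂ} (hτ : 0 < τ.im)
    (hu : jtheta τ (u - γ) ≠ 0) (hu' : jtheta τ (-u - γ) ≠ 0) (hξ : jtheta τ ξ ≠ 0) :
    alphaF τ γ u ξ * alphaF τ γ (-u) (-ξ) + betaF τ γ u ξ * betaF τ γ (-u) ξ = 1 := by
  rw [show -u - γ = -(u + γ) by ring, jtheta_neg, neg_ne_zero] at hu'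
  unfold alphaF betaF
  rw [add_comm ξ γ, show -ξ + γ = γ - ξ by ring, show -u + ξ = -(u - ξ) by ring,
    show -u - γ = -(u + γ) by ring, jtheta_neg τ u, jtheta_neg τ ξ, jtheta_neg τ (u - ξ),
    jtheta_neg τ (u + γ)]
  field_simp
  linear_combination jtheta_three_term hτ u ξ γ

lemma Rell_mul_apply {N : ℕ} (τ γ u : ℂ) (lam : Fin N → ℂ)
    (M : Matrix (Fin N × Fin N) (Fin N × Fin N) ℂ) (a b : Fin N) (q : Fin N × Fin N) :
    (Rell N τ γ u lam * M) (a, b) q =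
      if a = b then M (a, b) q
      else
        alphaF τ γ u (lam a - lam b) * M (a, b) q + betaF τ γ u (lam a - lam b) * M (b, a) q := by
  rw [Matrix.mul_apply]
  split_ifs with hab
  · simp [Rell, hab]
  · simp [Rell, hab, add_mul, Finset.sum_add_distrib]

theorem Rell_inversion_general (N : ℕ) (τ γ u : ℂ) (hτ : 0 < τ.im)
    (lam : Fin N → ℂ)
    (h1 : jtheta τ (u - γ) ≠ 0) (h2 : jtheta τ (-u - γ) ≠ 0)
    (hlam : ∀ a b : Fin N, a ≠ b → jtheta τ (lam a - lam b) ≠ 0) :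
    Rell N τ γ u lam * Rell21 N τ γ (-u) lam = 1 := by
  ext ⟨a, b⟩ ⟨c, d⟩
  rw [Rell_mul_apply]
  by_cases hab : a = b
  · subst hab
    simp [Rell21, Rell, Matrix.one_apply, and_comm, eq_comm]
  · have hdiag := alphaF_mul_alphaF_add_betaF_mul_betaF hτ h1 h2 (hlam a b hab)
    have hoff := alphaF_mul_betaF_add_betaF_mul_alphaF h1 h2 (hlam a b hab)
    rw [neg_sub] at hdiag hoff
    simp only [Rell21, Rell, Matrix.one_apply, Prod.mk.injEq, if_neg hab, if_neg (Ne.symm hab)]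
    by_cases hcd : c = a ∧ d = b
    · obtain ⟨rfl, rfl⟩ := hcd
      simpa [hab, Ne.symm hab] using hdiag
    by_cases hdc : c = b ∧ d = a
    · obtain ⟨rfl, rfl⟩ := hdc
      simpa [hab, Ne.symm hab] using hoff
    rw [if_neg (by tauto), if_neg (by tauto), if_neg (by tauto), if_neg (by tauto),
      if_neg (by tauto)]
    ring

/-- The elliptic dynamical R-matrix satisfies the inversion relation
`R(u,λ) R^{21}(-u,λ) = 1`. -/
theorem Rell_inversion (N : ℕ) (τ γ u : ℂ) (hτ : 0 < τ.im) (hγ : γ ≠ 0)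
    (lam : Fin N → ℂ)
    (h1 : jtheta τ (u - γ) ≠ 0) (h2 : jtheta τ (-u - γ) ≠ 0)
    (hlam : ∀ a b : Fin N, a ≠ b → jtheta τ (lam a - lam b) ≠ 0) :
    Rell N τ γ u lam * Rell21 N τ γ (-u) lam = 1 :=
  Rell_inversion_general N τ γ u hτ lam h1 h2 hlam
end

section
/- Identity of degenerate theta-type functions: for F(u,v) = θ(u+(k-1)γ)θ(v+γ)θ(v-kγ) / (θ(u+v)θ(v)θ(γ)), one has F(u,v) + F(-v,-u) = -θ(u-v+(k-1)γ)θ(kγ)/(θ(u)θ(v)), as an identity of meromorphic functions in u and v. -/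
theorem Set.BijOn.tsum_subtype_eq {α β M : Type*} [AddCommMonoid M] [TopologicalSpace M]
    {φ : α → β} {s : Set α} {t : Set β} (hφ : Set.BijOn φ s t) {f : α → M} {g : β → M}
    (hfg : ∀ x ∈ s, f x = g (φ x)) : ∑' x : s, f x = ∑' y : t, g y := by
  rw [← Equiv.tsum_eq (hφ.equiv φ)]
  exact tsum_congr fun x => hfg x x.2

namespace JTheta

open Complex
open scoped Real

noncomputable def thetaTerm (τ w : ℂ) (m : ℤ) : ℂ :=
  exp (π * I * τ * ((m : ℂ) + 1 / 2) ^ 2 + 2 * π * I * ((m : ℂ) + 1 / 2) * (w + 1 / 2))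

theorem jtheta_eq_neg_tsum (τ w : ℂ) : jtheta τ w = -∑' m : ℤ, thetaTerm τ w m := rfl

theorem thetaTerm_eq_mul_jacobiTheta₂_term (τ w : ℂ) (m : ℤ) :
    thetaTerm τ w m = exp (π * I * τ / 4 + π * I * (w + 1 / 2)) *
      jacobiTheta₂_term m (w + 1 / 2 + τ / 2) τ := by
  rw [thetaTerm, jacobiTheta₂_term, ← exp_add]
  congr 1
  ring

theorem summable_norm_thetaTerm {τ : ℂ} (hτ : 0 < τ.im) (w : ℂ) :
    Summable fun m : ℤ => ‖thetaTerm τ w m‖ := by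
  simp only [thetaTerm_eq_mul_jacobiTheta₂_term]
  exact summable_norm_iff.mpr (((summable_jacobiTheta₂_term_iff _ _).mpr hτ).mul_left _)

theorem jtheta_neg (τ w : ℂ) : jtheta τ (-w) = -jtheta τ w := by
  have hterm (m : ℤ) : thetaTerm τ (-w) (-1 - m) = -thetaTerm τ w m := by
    rw [thetaTerm, thetaTerm, ← exp_add_pi_mul_I, exp_eq_exp_iff_exists_int]
    exact ⟨-(m + 1), by push_cast; ring⟩
  let reflect : ℤ ≃ ℤ := Function.Involutive.toPerm (fun m => -1 - m) fun m => by ring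
  rw [jtheta_eq_neg_tsum, jtheta_eq_neg_tsum, ← reflect.tsum_eq]
  exact congrArg Neg.neg ((tsum_congr hterm).trans tsum_neg)

abbrev QuadIndex := (ℤ × ℤ) × ℤ × ℤ

noncomputable def thetaQuadTerm (τ z₁ z₂ z₃ z₄ : ℂ) (m : QuadIndex) : ℂ :=
  thetaTerm τ z₁ m.1.1 * thetaTerm τ z₂ m.1.2 * (thetaTerm τ z₃ m.2.1 * thetaTerm τ z₄ m.2.2)

theorem jtheta_mul_four_eq_tsum {τ : ℂ} (hτ : 0 < τ.im) (z₁ z₂ z₃ z₄ : ℂ) :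
    jtheta τ z₁ * jtheta τ z₂ * (jtheta τ z₃ * jtheta τ z₄) =
      ∑' m : QuadIndex, thetaQuadTerm τ z₁ z₂ z₃ z₄ m := by
  simp only [jtheta_eq_neg_tsum, neg_mul_neg]
  have h₁₂ := (summable_norm_thetaTerm hτ z₁).mul_norm (summable_norm_thetaTerm hτ z₂)
  have h₃₄ := (summable_norm_thetaTerm hτ z₃).mul_norm (summable_norm_thetaTerm hτ z₄)
  rw [tsum_mul_tsum_of_summable_norm (summable_norm_thetaTerm hτ z₁)
      (summable_norm_thetaTerm hτ z₂),
    tsum_mul_tsum_of_summable_norm (summable_norm_thetaTerm hτ z₃)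
      (summable_norm_thetaTerm hτ z₄),
    tsum_mul_tsum_of_summable_norm h₁₂ h₃₄]
  rfl

theorem summable_thetaQuadTerm {τ : ℂ} (hτ : 0 < τ.im) (z₁ z₂ z₃ z₄ : ℂ) :
    Summable (thetaQuadTerm τ z₁ z₂ z₃ z₄) :=
  (((summable_norm_thetaTerm hτ z₁).mul_norm (summable_norm_thetaTerm hτ z₂)).mul_norm
    ((summable_norm_thetaTerm hτ z₃).mul_norm (summable_norm_thetaTerm hτ z₄))).of_norm

theorem intCast_eq_half {k n : ℤ} (h : 2 * k = n) : (k : ℂ) = n / 2 := by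
  rw [← h]; push_cast; ring

theorem thetaQuadTerm_shift (τ x y a b : ℂ) {m₁ m₂ m₃ m₄ d : ℤ}
    (hd : 2 * d = m₁ + m₂ - m₃ - m₄) :
    thetaQuadTerm τ (x + a) (x - a) (y + b) (y - b) ((m₁, m₂), m₃, m₄) =
      thetaQuadTerm τ (y + a) (y - a) (x + b) (x - b) ((m₁ - d, m₂ - d), m₃ + d, m₄ + d) := by
  simp only [thetaQuadTerm, thetaTerm, ← exp_add]
  congr 1
  push_cast
  rw [intCast_eq_half hd]
  push_cast
  ring

theorem thetaQuadTerm_rotate (τ x y a b : ℂ) {m₁ m₂ m₃ m₄ k₁ k₂ k₃ k₄ : ℤ}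
    (h₁ : 2 * k₁ = m₁ + m₂ + m₃ + m₄ + 1) (h₂ : 2 * k₂ = m₁ + m₂ - m₃ - m₄ - 1)
    (h₃ : 2 * k₃ = m₁ - m₂ + m₃ - m₄ - 1) (h₄ : 2 * k₄ = m₁ - m₂ - m₃ + m₄ - 1) :
    thetaQuadTerm τ (x + a) (x - a) (y + b) (y - b) ((m₁, m₂), m₃, m₄) =
      thetaQuadTerm τ (x + y) (x - y) (a + b) (a - b) ((k₁, k₂), k₃, k₄) := by
  simp only [thetaQuadTerm, thetaTerm, ← exp_add]
  rw [exp_eq_exp_iff_exists_int]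
  refine ⟨k₁ - m₁, ?_⟩
  push_cast
  rw [intCast_eq_half h₁, intCast_eq_half h₂, intCast_eq_half h₃, intCast_eq_half h₄]
  push_cast
  ring

theorem thetaQuadTerm_rotate_neg (τ x y a b : ℂ) {m₁ m₂ m₃ m₄ k₁ k₂ k₃ k₄ : ℤ}
    (h₁ : 2 * k₁ = m₁ + m₂ + m₃ + m₄ + 1) (h₂ : 2 * k₂ = -m₁ - m₂ + m₃ + m₄ - 1)
    (h₃ : 2 * k₃ = m₁ - m₂ + m₃ - m₄ - 1) (h₄ : 2 * k₄ = m₁ - m₂ - m₃ + m₄ - 1) :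
    -thetaQuadTerm τ (y + a) (y - a) (x + b) (x - b) ((m₁, m₂), m₃, m₄) =
      thetaQuadTerm τ (x + y) (x - y) (a + b) (a - b) ((k₁, k₂), k₃, k₄) := by
  simp only [thetaQuadTerm, thetaTerm, ← exp_add]
  rw [← exp_add_pi_mul_I, exp_eq_exp_iff_exists_int]
  refine ⟨m₂ + 1, ?_⟩
  push_cast
  rw [intCast_eq_half h₁, intCast_eq_half h₂, intCast_eq_half h₃, intCast_eq_half h₄]
  push_cast
  ring

-- Each map below divides by `2` only where the division is exact on its domain of use.
def evenSum : Set QuadIndex := {m | (m.1.1 + m.1.2 + m.2.1 + m.2.2) % 2 = 0}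

def evenShift : QuadIndex → QuadIndex
  | ((m₁, m₂), m₃, m₄) =>
    ((m₁ - (m₁ + m₂ - m₃ - m₄) / 2, m₂ - (m₁ + m₂ - m₃ - m₄) / 2),
      m₃ + (m₁ + m₂ - m₃ - m₄) / 2, m₄ + (m₁ + m₂ - m₃ - m₄) / 2)

def oddRotate : QuadIndex → QuadIndex
  | ((m₁, m₂), m₃, m₄) =>
    (((m₁ + m₂ + m₃ + m₄ + 1) / 2, (m₁ + m₂ - m₃ - m₄ - 1) / 2),
      (m₁ - m₂ + m₃ - m₄ - 1) / 2, (m₁ - m₂ - m₃ + m₄ - 1) / 2)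

def oddToEven : QuadIndex → QuadIndex
  | ((m₁, m₂), m₃, m₄) =>
    (((m₁ + m₂ + m₃ + m₄ + 1) / 2, (-m₁ - m₂ + m₃ + m₄ - 1) / 2),
      (m₁ - m₂ + m₃ - m₄ - 1) / 2, (m₁ - m₂ - m₃ + m₄ - 1) / 2)

def evenToOdd : QuadIndex → QuadIndex
  | ((k₁, k₂), k₃, k₄) =>
    (((k₁ - k₂ + k₃ + k₄) / 2, (k₁ - k₂ - k₃ - k₄) / 2 - 1),
      (k₁ + k₂ + k₃ - k₄) / 2, (k₁ + k₂ - k₃ + k₄) / 2)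

theorem bijOn_evenShift : Set.BijOn evenShift evenSum evenSum := by
  refine Set.InvOn.bijOn (f' := evenShift) ⟨?_, ?_⟩ ?_ ?_ <;>
    rintro ⟨⟨m₁, m₂⟩, m₃, m₄⟩ h <;>
    simp only [evenSum, evenShift, Set.mem_ofPred_eq, Prod.mk.injEq] at h ⊢ <;> omega

theorem bijOn_oddRotate : Set.BijOn oddRotate evenSumᶜ evenSumᶜ := by
  refine Set.InvOn.bijOn (f' := oddRotate) ⟨?_, ?_⟩ ?_ ?_ <;>
    rintro ⟨⟨m₁, m₂⟩, m₃, m₄⟩ h <;>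
    simp only [evenSum, oddRotate, Set.mem_compl_iff, Set.mem_ofPred_eq,
      Prod.mk.injEq] at h ⊢ <;>
    omega

theorem bijOn_oddToEven : Set.BijOn oddToEven evenSumᶜ evenSum := by
  refine Set.InvOn.bijOn (f' := evenToOdd) ⟨?_, ?_⟩ ?_ ?_ <;>
    rintro ⟨⟨m₁, m₂⟩, m₃, m₄⟩ h <;>
    simp only [evenSum, oddToEven, evenToOdd, Set.mem_compl_iff, Set.mem_ofPred_eq,
      Prod.mk.injEq] at h ⊢ <;>
    omega

section ThreeTerm

variable (τ x y a b : ℂ)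

theorem tsum_evenSum_thetaQuadTerm_swap :
    ∑' m : evenSum, thetaQuadTerm τ (x + a) (x - a) (y + b) (y - b) m =
      ∑' m : evenSum, thetaQuadTerm τ (y + a) (y - a) (x + b) (x - b) m := by
  refine bijOn_evenShift.tsum_subtype_eq ?_
  rintro ⟨⟨m₁, m₂⟩, m₃, m₄⟩ h
  simp only [evenSum, Set.mem_ofPred_eq] at h
  exact thetaQuadTerm_shift τ x y a b (by omega)

theorem tsum_compl_evenSum_thetaQuadTerm_rotate :
    ∑' m : ↥evenSumᶜ, thetaQuadTerm τ (x + a) (x - a) (y + b) (y - b) m =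
      ∑' m : ↥evenSumᶜ, thetaQuadTerm τ (x + y) (x - y) (a + b) (a - b) m := by
  refine bijOn_oddRotate.tsum_subtype_eq ?_
  rintro ⟨⟨m₁, m₂⟩, m₃, m₄⟩ h
  simp only [evenSum, Set.mem_compl_iff, Set.mem_ofPred_eq] at h
  exact thetaQuadTerm_rotate τ x y a b (by omega) (by omega) (by omega) (by omega)

theorem tsum_evenSum_thetaQuadTerm_rotate :
    ∑' m : evenSum, thetaQuadTerm τ (x + y) (x - y) (a + b) (a - b) m =
      -∑' m : ↥evenSumᶜ, thetaQuadTerm τ (y + a) (y - a) (x + b) (x - b) m := by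
  rw [← tsum_neg, eq_comm]
  refine bijOn_oddToEven.tsum_subtype_eq
    (f := fun m => -thetaQuadTerm τ (y + a) (y - a) (x + b) (x - b) m) ?_
  rintro ⟨⟨m₁, m₂⟩, m₃, m₄⟩ h
  simp only [evenSum, Set.mem_compl_iff, Set.mem_ofPred_eq] at h
  exact thetaQuadTerm_rotate_neg τ x y a b (by omega) (by omega) (by omega) (by omega)

end ThreeTerm

theorem jtheta_three_term {τ : ℂ} (hτ : 0 < τ.im) (x y a b : ℂ) :
    jtheta τ (x + a) * jtheta τ (x - a) * (jtheta τ (y + b) * jtheta τ (y - b)) =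
      jtheta τ (y + a) * jtheta τ (y - a) * (jtheta τ (x + b) * jtheta τ (x - b)) +
        jtheta τ (x + y) * jtheta τ (x - y) * (jtheta τ (a + b) * jtheta τ (a - b)) := by
  have split (z₁ z₂ z₃ z₄ : ℂ) :=
    ((summable_thetaQuadTerm hτ z₁ z₂ z₃ z₄).tsum_subtype_add_tsum_subtype_compl evenSum).symm
  simp only [jtheta_mul_four_eq_tsum hτ]
  rw [split, split, split, tsum_evenSum_thetaQuadTerm_swap τ x y a b,
    tsum_compl_evenSum_thetaQuadTerm_rotate τ x y a b, tsum_evenSum_thetaQuadTerm_rotate τ x y a b]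
  ring

theorem jtheta_three_term_shift {τ : ℂ} (hτ : 0 < τ.im) (u v γ κ : ℂ) :
    jtheta τ (u + (κ - 1) * γ) * jtheta τ (v - κ * γ) * (jtheta τ (v + γ) * jtheta τ u) =
      jtheta τ (u + κ * γ) * jtheta τ (v - (κ - 1) * γ) * (jtheta τ v * jtheta τ (u - γ)) -
        jtheta τ (u + v) * jtheta τ γ * (jtheta τ (κ * γ) * jtheta τ (u - v + (κ - 1) * γ)) := by
  have h := jtheta_three_term hτ ((u + v - γ) / 2) ((u + v + γ) / 2)
    ((u - v + (2 * κ - 1) * γ) / 2) ((v - u + γ) / 2)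
  rw [show (u + v - γ) / 2 - (u + v + γ) / 2 = -γ by ring, jtheta_neg] at h
  convert h using 1 <;> ring_nf

end JTheta

theorem theta_degeneration_identity_general (τ γ u v : ℂ) (hτ : 0 < τ.im) (k : ℕ)
    (hγ : jtheta τ γ ≠ 0) (huv : jtheta τ (u + v) ≠ 0)
    (hu : jtheta τ u ≠ 0) (hv : jtheta τ v ≠ 0) :
    jtheta τ (u + ((k : ℂ) - 1) * γ) * jtheta τ (v + γ) * jtheta τ (v - (k : ℂ) * γ) /
        (jtheta τ (u + v) * jtheta τ v * jtheta τ γ) +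
      jtheta τ (-v + ((k : ℂ) - 1) * γ) * jtheta τ (-u + γ) * jtheta τ (-u - (k : ℂ) * γ) /
        (jtheta τ (-v + -u) * jtheta τ (-u) * jtheta τ γ) =
    -(jtheta τ (u - v + ((k : ℂ) - 1) * γ) * jtheta τ ((k : ℂ) * γ)) /
      (jtheta τ u * jtheta τ v) := by
  rw [show -v + ((k : ℂ) - 1) * γ = -(v - ((k : ℂ) - 1) * γ) by ring,
    show -u + γ = -(u - γ) by ring, show -u - (k : ℂ) * γ = -(u + (k : ℂ) * γ) by ring,
    show -v + -u = -(u + v) by ring]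
  simp only [JTheta.jtheta_neg]
  field_simp
  linear_combination JTheta.jtheta_three_term_shift hτ u v γ k

/-- For `F(u,v) = θ(u+(k-1)γ)θ(v+γ)θ(v-kγ) / (θ(u+v)θ(v)θ(γ))` one has
`F(u,v) + F(-v,-u) = -θ(u-v+(k-1)γ)θ(kγ)/(θ(u)θ(v))`, as an identity of
meromorphic functions of `u` and `v`. -/
theorem theta_degeneration_identity (τ γ u v : ℂ) (hτ : 0 < τ.im) (k : ℕ) (hk : 1 ≤ k)
    (hγ : jtheta τ γ ≠ 0) (huv : jtheta τ (u + v) ≠ 0)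
    (hu : jtheta τ u ≠ 0) (hv : jtheta τ v ≠ 0) :
    jtheta τ (u + ((k : ℂ) - 1) * γ) * jtheta τ (v + γ) * jtheta τ (v - (k : ℂ) * γ) /
        (jtheta τ (u + v) * jtheta τ v * jtheta τ γ) +
      jtheta τ (-v + ((k : ℂ) - 1) * γ) * jtheta τ (-u + γ) * jtheta τ (-u - (k : ℂ) * γ) /
        (jtheta τ (-v + -u) * jtheta τ (-u) * jtheta τ γ) =
    -(jtheta τ (u - v + ((k : ℂ) - 1) * γ) * jtheta τ ((k : ℂ) * γ)) /
      (jtheta τ u * jtheta τ v) :=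
  theta_degeneration_identity_general τ γ u v hτ k hγ huv hu hv
end
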